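/- Let d ≥ 2 and k : ℤ^d → [0,1] with connected E_k. Suppose that for every exhaustion (Λ_R) the killed random walk conditioned to hit Λ_R^c before Δ converges in distribution (in the sense of finite-dimensional distributions of the first n steps) to a limit independent of the exhaustion. Then there exists a function a : ℤ^d → ℝ, positive on E_k, such that for all x, y ∈ E_k and every exhaustion, P_y[τ(Λ_R^c) < τ(Δ)] / P_x[τ(Λ_R^c) < τ(Δ)] → a(y)/a(x) as R → ∞, and a is massive harmonic on E_k: a(x) = ((1−k(x))/(2d)) Σ_{y~x} a(y). -/

import Mathlib

/-!
Along a nearest-neighbour path `s` from `x` to `y` inside `E_k`, the conditioned law of the first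
steps gives `s` the mass `pathWt s · P_y[exit] / P_x[exit]` as soon as `Λ_R` contains `s`, so the
convergence of the conditioned laws forces `P_y[exit] / P_x[exit]` to converge to `L(s) / pathWt s`,
whatever the exhaustion. Fixing a base point `x₀`, `a y` is the limit of `P_y / P_{x₀}`; it is
positive because the limit of `P_{x₀} / P_y` is its inverse. Massive harmonicity passes to the
limit from the first-step decomposition of the exit probability, neighbours outside `E_k` being
sites with `k = 1`, whose exit probability vanishes.
-/

open scoped BigOperators Classical

namespace KRW

abbrev V (d : ℕ) := Fin d → ℤ

def IsNbr {d : ℕ} (x y : V d) : Prop := (∑ i, |x i - y i|) = 1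

noncomputable def znorm {d : ℕ} (x : V d) : ℝ := Real.sqrt (∑ i, ((x i : ℝ))^2)

noncomputable def stepWt {d : ℕ} (k : V d → ℝ) (x y : V d) : ℝ :=
  if IsNbr x y then (1 - k x) / (2 * d) else 0

noncomputable def pathWt {d : ℕ} (k : V d → ℝ) (n : ℕ) (γ : Fin (n + 1) → V d) : ℝ :=
  ∏ i : Fin n, stepWt k (γ i.castSucc) (γ i.succ)

/-- `P_x[τ(Λᶜ) < τ(Δ)]`. -/
noncomputable def exitProb {d : ℕ} (k : V d → ℝ) (Λ : Set (V d)) (x : V d) : ℝ :=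
  ∑' n : ℕ, ∑' γ : Fin (n + 1) → V d,
    if γ 0 = x ∧ (∀ i : Fin n, γ i.castSucc ∈ Λ) ∧ γ (Fin.last n) ∉ Λ then pathWt k n γ else 0

def IsExhaustion {d : ℕ} (Λ : ℕ → Set (V d)) : Prop :=
  (∀ R, (Λ R).Finite) ∧ Monotone Λ ∧ ∀ x : V d, ∃ R, x ∈ Λ R

def Ek {d : ℕ} (k : V d → ℝ) : Set (V d) :=
  {x | ∃ p : ℕ → V d, p 0 = x ∧ (∀ i, IsNbr (p i) (p (i + 1))) ∧ (∀ i, k (p i) < 1) ∧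
    Filter.Tendsto (fun i => znorm (p i)) Filter.atTop Filter.atTop}

def EkConnected {d : ℕ} (k : V d → ℝ) : Prop :=
  ∀ x ∈ Ek k, ∀ y ∈ Ek k, ∃ (n : ℕ) (p : Fin (n + 1) → V d),
    p 0 = x ∧ p (Fin.last n) = y ∧ (∀ i : Fin n, IsNbr (p i.castSucc) (p i.succ)) ∧
    ∀ i, p i ∈ Ek k

noncomputable def srwWt {d : ℕ} (n : ℕ) (s : Fin (n + 1) → V d) : ℝ :=
  ∏ i : Fin n, (if IsNbr (s i.castSucc) (s i.succ) then 1 / (2 * (d : ℝ)) else 0)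

noncomputable def killWt {d : ℕ} (k : V d → ℝ) (n : ℕ) (s : Fin (n + 1) → V d) : ℝ :=
  ∏ i : Fin n, (1 - k (s i.castSucc))

noncomputable def jointExitProb {d : ℕ} (k : V d → ℝ) (Λ : Set (V d)) (n : ℕ)
    (s : Fin (n + 1) → V d) : ℝ :=
  pathWt k n s * (if ∀ i, s i ∈ Λ then exitProb k Λ (s (Fin.last n)) else 1)


open Filter Topology

variable {d : ℕ}

lemma IsNbr.symm {x y : V d} (h : IsNbr x y) : IsNbr y x := by
  unfold IsNbr at *
  rw [← h]
  exact Finset.sum_congr rfl fun i _ => abs_sub_comm _ _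

lemma IsNbr.eq_add_single {x y : V d} (h : IsNbr x y) :
    ∃ i, (y i - x i = 1 ∨ y i - x i = -1) ∧ y = x + Pi.single i (y i - x i) := by
  obtain ⟨i, hi⟩ : ∃ i, x i ≠ y i := by
    by_contra! hxy
    simp [IsNbr, hxy] at h
  have hsplit := Finset.add_sum_erase Finset.univ (fun j => |x j - y j|) (Finset.mem_univ i)
  have hi1 : 1 ≤ |x i - y i| := Int.one_le_abs (sub_ne_zero.mpr hi)
  have hrest : ∑ j ∈ Finset.univ.erase i, |x j - y j| = 0 := by
    have := Finset.sum_nonneg fun j (_ : j ∈ Finset.univ.erase i) => abs_nonneg (x j - y j)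
    unfold IsNbr at h
    omega
  refine ⟨i, ?_, funext fun j => ?_⟩
  · have : |x i - y i| = 1 := by unfold IsNbr at h; omega
    rcases abs_eq (zero_le_one' ℤ) |>.mp this with h' | h' <;> omega
  · rcases eq_or_ne j i with rfl | hj
    · simp
    · have := (Finset.sum_eq_zero_iff_of_nonneg fun j _ => abs_nonneg (x j - y j)).mp hrest j
        (Finset.mem_erase.mpr ⟨hj, Finset.mem_univ j⟩)
      simp only [Pi.add_apply, Pi.single_apply, hj, if_false, add_zero]
      rw [abs_eq_zero, sub_eq_zero] at this
      exact this.symm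

lemma IsNbr.dim_pos {x y : V d} (h : IsNbr x y) : 0 < d := by
  rcases Nat.eq_zero_or_pos d with rfl | hd
  · simp [IsNbr] at h
  · exact hd

def nbrFinset (x : V d) : Finset (V d) :=
  (Finset.univ ×ˢ ({1, -1} : Finset ℤ)).image fun p => x + Pi.single p.1 p.2

lemma mem_nbrFinset_of_isNbr {x y : V d} (h : IsNbr x y) : y ∈ nbrFinset x := by
  obtain ⟨i, hi, hy⟩ := h.eq_add_single
  exact Finset.mem_image.mpr ⟨(i, y i - x i), by simpa using hi, hy.symm⟩

lemma card_nbrFinset_le (x : V d) : (nbrFinset x).card ≤ 2 * d :=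
  Finset.card_image_le.trans (by simp [mul_comm])

section Weights

variable {k : V d → ℝ}

lemma stepWt_nonneg {x : V d} (hkx : k x ≤ 1) (y : V d) : 0 ≤ stepWt k x y := by
  unfold stepWt
  split_ifs
  · exact div_nonneg (sub_nonneg.mpr hkx) (by positivity)
  · rfl

lemma stepWt_pos {x y : V d} (h : IsNbr x y) (hkx : k x < 1) : 0 < stepWt k x y := by
  have := h.dim_pos
  rw [stepWt, if_pos h]
  exact div_pos (sub_pos.mpr hkx) (by positivity)

lemma stepWt_eq_zero_of_not_isNbr {x y : V d} (h : ¬ IsNbr x y) : stepWt k x y = 0 :=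
  if_neg h

lemma stepWt_eq_zero_of_eq_one {x : V d} (hkx : k x = 1) (y : V d) : stepWt k x y = 0 := by
  simp [stepWt, hkx]

lemma stepWt_le_inv {x : V d} (hkx : 0 ≤ k x) (y : V d) : stepWt k x y ≤ 1 / (2 * d) := by
  unfold stepWt
  split_ifs
  · gcongr
    linarith
  · positivity

lemma sum_stepWt_le_one {x : V d} (hkx : 0 ≤ k x) : ∑ y ∈ nbrFinset x, stepWt k x y ≤ 1 :=
  calc ∑ y ∈ nbrFinset x, stepWt k x y ≤ ∑ _y ∈ nbrFinset x, 1 / (2 * (d : ℝ)) :=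
        Finset.sum_le_sum fun y _ => stepWt_le_inv hkx y
    _ = (nbrFinset x).card / (2 * d) := by rw [Finset.sum_const, nsmul_eq_mul, mul_one_div]
    _ ≤ 1 := div_le_one_of_le₀ (by exact_mod_cast card_nbrFinset_le x) (by positivity)

lemma sum_nbrFinset_stepWt_mul (x : V d) (a : V d → ℝ) :
    ∑ y ∈ nbrFinset x, stepWt k x y * a y =
      (1 - k x) / (2 * d) * ∑' y : V d, if IsNbr x y then a y else 0 := by
  rw [tsum_eq_sum fun y hy => if_neg fun h => hy (mem_nbrFinset_of_isNbr h), Finset.mul_sum]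
  refine Finset.sum_congr rfl fun y _ => ?_
  by_cases h : IsNbr x y <;> simp [stepWt, h]

lemma pathWt_nonneg (hk : ∀ x, k x ≤ 1) (n : ℕ) (γ : Fin (n + 1) → V d) :
    0 ≤ pathWt k n γ :=
  Finset.prod_nonneg fun _ _ => stepWt_nonneg (hk _) _

lemma pathWt_pos {n : ℕ} {γ : Fin (n + 1) → V d}
    (hγ : ∀ i : Fin n, IsNbr (γ i.castSucc) (γ i.succ) ∧ k (γ i.castSucc) < 1) :
    0 < pathWt k n γ :=
  Finset.prod_pos fun i _ => stepWt_pos (hγ i).1 (hγ i).2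

lemma isNbr_of_pathWt_ne_zero {n : ℕ} {γ : Fin (n + 1) → V d} (h : pathWt k n γ ≠ 0)
    (i : Fin n) : IsNbr (γ i.castSucc) (γ i.succ) := by
  by_contra hi
  exact h (Finset.prod_eq_zero (Finset.mem_univ i) (stepWt_eq_zero_of_not_isNbr hi))

lemma pathWt_cons (n : ℕ) (x : V d) (t : Fin (n + 1) → V d) :
    pathWt k (n + 1) (Fin.cons x t) = stepWt k x (t 0) * pathWt k n t := by
  simp [pathWt, Fin.prod_univ_succ]

end Weights

def pathSet (n : ℕ) (x : V d) : Set (Fin (n + 1) → V d) :=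
  {γ | γ 0 = x ∧ ∀ i : Fin n, IsNbr (γ i.castSucc) (γ i.succ)}

lemma pathSet_succ_subset (n : ℕ) (x : V d) :
    pathSet (n + 1) x ⊆ ⋃ y ∈ nbrFinset x, Fin.cons x '' pathSet n y := by
  rintro γ ⟨hγ0, hγ⟩
  have h01 : IsNbr x (γ 1) := by simpa [hγ0] using hγ 0
  refine Set.mem_biUnion (mem_nbrFinset_of_isNbr h01) ⟨Fin.tail γ, ⟨rfl, fun i => ?_⟩, ?_⟩
  · simpa [Fin.tail, ← Fin.succ_castSucc] using hγ i.succ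
  · rw [← hγ0, Fin.cons_self_tail]

lemma pathSet_finite (n : ℕ) (x : V d) : (pathSet n x).Finite := by
  induction n generalizing x with
  | zero =>
    refine (Set.finite_singleton fun _ => x).subset fun γ hγ => ?_
    exact funext fun i => by rw [Fin.fin_one_eq_zero i, hγ.1]
  | succ n ih =>
    exact ((nbrFinset x).finite_toSet.biUnion fun y _ => (ih y).image _).subset
      (pathSet_succ_subset n x)

lemma tsum_ite_head_eq {α M : Type*} [DecidableEq α] [AddCommMonoid M] [TopologicalSpace M]
    {n : ℕ} (x : α) (f : (Fin (n + 1) → α) → M) :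
    ∑' γ, (if γ 0 = x then f γ else 0) = ∑' t : Fin n → α, f (Fin.cons x t) := by
  rw [← (Fin.cons_right_injective x).tsum_eq]
  · simp
  · intro γ hγ
    refine ⟨Fin.tail γ, ?_⟩
    rw [← of_not_not fun h => hγ (if_neg h), Fin.cons_self_tail]

section ExitProb

variable {k : V d → ℝ} {Λ : Set (V d)}

variable (k Λ) in
noncomputable def exitWt (n : ℕ) (γ : Fin (n + 1) → V d) : ℝ :=
  if (∀ i : Fin n, γ i.castSucc ∈ Λ) ∧ γ (Fin.last n) ∉ Λ then pathWt k n γ else 0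

variable (k Λ) in
/-- `P_x[τ(Λᶜ) = n < τ(Δ)]`. -/
noncomputable def exitAt (n : ℕ) (x : V d) : ℝ :=
  ∑' γ : Fin (n + 1) → V d, if γ 0 = x then exitWt k Λ n γ else 0

lemma exitProb_eq_tsum_exitAt (x : V d) : exitProb k Λ x = ∑' n, exitAt k Λ n x := by
  simp only [exitProb, exitAt, exitWt, ite_and]

lemma exitWt_nonneg (hk : ∀ x, k x ≤ 1) (n : ℕ) (γ : Fin (n + 1) → V d) :
    0 ≤ exitWt k Λ n γ := by
  unfold exitWt
  split_ifs
  exacts [pathWt_nonneg hk n γ, le_rfl]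

lemma exitAt_nonneg (hk : ∀ x, k x ≤ 1) (n : ℕ) (x : V d) : 0 ≤ exitAt k Λ n x :=
  tsum_nonneg fun γ => by split_ifs; exacts [exitWt_nonneg hk n γ, le_rfl]

lemma summable_ite_exitWt (n : ℕ) (x : V d) :
    Summable fun γ : Fin (n + 1) → V d => if γ 0 = x then exitWt k Λ n γ else 0 := by
  refine summable_of_hasFiniteSupport ((pathSet_finite n x).subset fun γ hγ => ?_)
  by_cases h0 : γ 0 = x
  · have hw : exitWt k Λ n γ ≠ 0 := by simpa [h0] using hγ
    have hp : pathWt k n γ ≠ 0 := fun h => hw (by simp [exitWt, h])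
    exact ⟨h0, isNbr_of_pathWt_ne_zero hp⟩
  · simp [h0] at hγ

lemma exitWt_le_exitAt (hk : ∀ x, k x ≤ 1) {n : ℕ} (γ : Fin (n + 1) → V d) :
    exitWt k Λ n γ ≤ exitAt k Λ n (γ 0) := by
  refine le_of_eq_of_le (if_pos rfl).symm
    ((summable_ite_exitWt n (γ 0)).le_tsum γ fun γ' _ => ?_)
  split_ifs
  exacts [exitWt_nonneg hk n γ', le_rfl]

lemma exitAt_zero (x : V d) : exitAt k Λ 0 x = if x ∈ Λ then 0 else 1 := by
  rw [exitAt, tsum_ite_head_eq]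
  simp [exitWt, pathWt]

lemma exitWt_cons (n : ℕ) (x : V d) (t : Fin (n + 1) → V d) :
    exitWt k Λ (n + 1) (Fin.cons x t) =
      if x ∈ Λ then stepWt k x (t 0) * exitWt k Λ n t else 0 := by
  simp [exitWt, pathWt_cons, Fin.forall_fin_succ, and_assoc, ite_and]

lemma exitAt_succ_of_not_mem (n : ℕ) {x : V d} (hx : x ∉ Λ) : exitAt k Λ (n + 1) x = 0 := by
  simp [exitAt, tsum_ite_head_eq, exitWt_cons, hx]

lemma exitAt_succ_of_mem (n : ℕ) {x : V d} (hx : x ∈ Λ) :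
    exitAt k Λ (n + 1) x = ∑ y ∈ nbrFinset x, stepWt k x y * exitAt k Λ n y := by
  have hsplit : ∀ t : Fin (n + 1) → V d, stepWt k x (t 0) * exitWt k Λ n t =
      ∑ y ∈ nbrFinset x, stepWt k x y * (if t 0 = y then exitWt k Λ n t else 0) := by
    intro t
    simp only [mul_ite, mul_zero, Finset.sum_ite_eq]
    split_ifs with ht
    · rfl
    · rw [stepWt_eq_zero_of_not_isNbr fun h => ht (mem_nbrFinset_of_isNbr h), zero_mul]
  rw [exitAt, tsum_ite_head_eq]
  simp only [exitWt_cons, if_pos hx, hsplit]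
  rw [Summable.tsum_finsetSum fun y _ => (summable_ite_exitWt n y).mul_left _]
  simp only [tsum_mul_left]
  rfl

lemma sum_range_exitAt_le_one (hk : ∀ x, k x ∈ Set.Icc (0 : ℝ) 1) (N : ℕ) (x : V d) :
    ∑ n ∈ Finset.range N, exitAt k Λ n x ≤ 1 := by
  induction N generalizing x with
  | zero => simp
  | succ N ih =>
    rw [Finset.sum_range_succ', exitAt_zero]
    by_cases hx : x ∈ Λ
    · simp only [exitAt_succ_of_mem _ hx, if_pos hx, add_zero]
      rw [Finset.sum_comm]
      calc ∑ y ∈ nbrFinset x, ∑ n ∈ Finset.range N, stepWt k x y * exitAt k Λ n y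
          = ∑ y ∈ nbrFinset x, stepWt k x y * ∑ n ∈ Finset.range N, exitAt k Λ n y := by
            simp only [Finset.mul_sum]
        _ ≤ ∑ y ∈ nbrFinset x, stepWt k x y :=
            Finset.sum_le_sum fun y _ => mul_le_of_le_one_right (stepWt_nonneg (hk x).2 y) (ih y)
        _ ≤ 1 := sum_stepWt_le_one (hk x).1
    · simp [exitAt_succ_of_not_mem _ hx, hx]

lemma summable_exitAt (hk : ∀ x, k x ∈ Set.Icc (0 : ℝ) 1) (x : V d) :
    Summable fun n => exitAt k Λ n x :=
  summable_of_sum_range_le (fun n => exitAt_nonneg (fun x => (hk x).2) n x)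
    fun N => sum_range_exitAt_le_one hk N x

lemma exitProb_nonneg (hk : ∀ x, k x ≤ 1) (x : V d) : 0 ≤ exitProb k Λ x := by
  rw [exitProb_eq_tsum_exitAt]
  exact tsum_nonneg fun n => exitAt_nonneg hk n x

lemma exitProb_eq_sum_stepWt_mul (hk : ∀ x, k x ∈ Set.Icc (0 : ℝ) 1) {x : V d}
    (hx : x ∈ Λ) :
    exitProb k Λ x = ∑ y ∈ nbrFinset x, stepWt k x y * exitProb k Λ y := by
  simp only [exitProb_eq_tsum_exitAt]
  rw [(summable_exitAt hk x).tsum_eq_zero_add, exitAt_zero, if_pos hx, zero_add]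
  simp only [exitAt_succ_of_mem _ hx]
  rw [Summable.tsum_finsetSum fun y _ => (summable_exitAt hk y).mul_left _]
  simp only [tsum_mul_left]

lemma exitProb_eq_zero_of_eq_one (hk : ∀ x, k x ∈ Set.Icc (0 : ℝ) 1) {x : V d} (hx : x ∈ Λ)
    (hkx : k x = 1) : exitProb k Λ x = 0 := by
  simp [exitProb_eq_sum_stepWt_mul hk hx, stepWt_eq_zero_of_eq_one hkx]

lemma pathWt_le_exitProb (hk : ∀ x, k x ∈ Set.Icc (0 : ℝ) 1)
    {n : ℕ} {γ : Fin (n + 1) → V d} (hin : ∀ i : Fin n, γ i.castSucc ∈ Λ)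
    (hout : γ (Fin.last n) ∉ Λ) :
    pathWt k n γ ≤ exitProb k Λ (γ 0) :=
  calc pathWt k n γ = exitWt k Λ n γ := (if_pos ⟨hin, hout⟩).symm
    _ ≤ exitAt k Λ n (γ 0) := exitWt_le_exitAt (fun x => (hk x).2) γ
    _ ≤ exitProb k Λ (γ 0) := by
      rw [exitProb_eq_tsum_exitAt]
      exact (summable_exitAt hk _).le_tsum n fun m _ =>
        exitAt_nonneg (fun x => (hk x).2) m _

end ExitProb

section Ek

variable {k : V d → ℝ}

lemma lt_one_of_mem_Ek {x : V d} (hx : x ∈ Ek k) : k x < 1 := by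
  obtain ⟨p, rfl, -, hp, -⟩ := hx
  exact hp 0

lemma mem_Ek_of_isNbr {x y : V d} (hx : x ∈ Ek k) (hxy : IsNbr x y) (hky : k y < 1) :
    y ∈ Ek k := by
  obtain ⟨p, rfl, hnbr, hp, htend⟩ := hx
  refine ⟨fun n => Nat.rec y (fun m _ => p m) n, rfl, ?_, ?_, ?_⟩
  · rintro (_ | m)
    exacts [hxy.symm, hnbr m]
  · rintro (_ | m)
    exacts [hky, hp m]
  · exact (tendsto_add_atTop_iff_nat 1).mp htend

lemma exitProb_pos (hk : ∀ x, k x ∈ Set.Icc (0 : ℝ) 1) {Λ : Set (V d)} (hΛ : Λ.Finite)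
    {x : V d} (hx : x ∈ Ek k) : 0 < exitProb k Λ x := by
  obtain ⟨p, rfl, hnbr, hp, htend⟩ := hx
  have hexit : ∃ n, p n ∉ Λ := by
    obtain ⟨B, hB⟩ := (hΛ.image znorm).bddAbove
    obtain ⟨n, hn⟩ := (tendsto_atTop.mp htend (B + 1)).exists
    exact ⟨n, fun hmem => by linarith [hB (Set.mem_image_of_mem znorm hmem)]⟩
  let γ : Fin (Nat.find hexit + 1) → V d := fun i => p i
  calc 0 < pathWt k _ γ := pathWt_pos fun i => ⟨hnbr i, hp i⟩
    _ ≤ exitProb k Λ (γ 0) :=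
      pathWt_le_exitProb hk (fun i => not_not.mp (Nat.find_min hexit i.isLt))
        (by simpa [γ] using Nat.find_spec hexit)

end Ek

lemma IsExhaustion.eventually_mem {Λ : ℕ → Set (V d)} (hΛ : IsExhaustion Λ) (x : V d) :
    ∀ᶠ R in atTop, x ∈ Λ R := by
  obtain ⟨R₀, hR₀⟩ := hΛ.2.2 x
  exact eventually_atTop.mpr ⟨R₀, fun R hR => hΛ.2.1 hR hR₀⟩

def box (d R : ℕ) : Set (V d) := {z | ∀ i, |z i| ≤ (R : ℤ)}

lemma isExhaustion_box (d : ℕ) : IsExhaustion (box d) := by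
  refine ⟨fun R => ?_, fun R S hRS z hz i => (hz i).trans (by exact_mod_cast hRS), fun x => ?_⟩
  · refine (Set.Finite.pi fun _ => Set.finite_Icc (-(R : ℤ)) R).subset fun z hz i _ => ?_
    exact abs_le.mp (hz i)
  · refine ⟨Finset.univ.sup fun i => (x i).natAbs, fun i => ?_⟩
    rw [Int.abs_eq_natAbs]
    exact_mod_cast Finset.le_sup (f := fun i => (x i).natAbs) (Finset.mem_univ i)

section RatioLimit

variable {k : V d → ℝ}

lemma tendsto_exitProb_div_of_tendsto_jointExitProb {Λ : ℕ → Set (V d)} (hΛ : IsExhaustion Λ)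
    {n : ℕ} {s : Fin (n + 1) → V d} (hs : pathWt k n s ≠ 0) {l : ℝ}
    (h : Tendsto (fun R => jointExitProb k (Λ R) n s / exitProb k (Λ R) (s 0)) atTop (𝓝 l)) :
    Tendsto (fun R => exitProb k (Λ R) (s (Fin.last n)) / exitProb k (Λ R) (s 0)) atTop
      (𝓝 ((pathWt k n s)⁻¹ * l)) := by
  refine (h.const_mul _).congr' ?_
  filter_upwards [eventually_all.mpr fun i => hΛ.eventually_mem (s i)] with R hR
  rw [jointExitProb, if_pos hR, mul_div_assoc, inv_mul_cancel_left₀ hs]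

variable (k) in
def HasRatioLimit (x y : V d) (c : ℝ) : Prop :=
  ∀ Λ : ℕ → Set (V d), IsExhaustion Λ →
    Tendsto (fun R => exitProb k (Λ R) y / exitProb k (Λ R) x) atTop (𝓝 c)

lemma exists_hasRatioLimit (hconn : EkConnected k) {L : (n : ℕ) → (Fin (n + 1) → V d) → ℝ}
    (hcv : ∀ Λ : ℕ → Set (V d), IsExhaustion Λ → ∀ (n : ℕ) (s : Fin (n + 1) → V d),
      (∀ i, s i ∈ Ek k) →
      Tendsto (fun R => jointExitProb k (Λ R) n s / exitProb k (Λ R) (s 0)) atTop (𝓝 (L n s)))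
    {x y : V d} (hx : x ∈ Ek k) (hy : y ∈ Ek k) : ∃ c, HasRatioLimit k x y c := by
  obtain ⟨n, s, rfl, rfl, hstep, hmem⟩ := hconn x hx y hy
  have hs : pathWt k n s ≠ 0 := (pathWt_pos fun i => ⟨hstep i, lt_one_of_mem_Ek (hmem _)⟩).ne'
  exact ⟨_, fun Λ hΛ =>
    tendsto_exitProb_div_of_tendsto_jointExitProb hΛ hs (hcv Λ hΛ n s hmem)⟩

variable (k) in
noncomputable def ratioLimit (x y : V d) : ℝ :=
  limUnder atTop fun R => exitProb k (box d R) y / exitProb k (box d R) x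

lemma HasRatioLimit.ratioLimit_eq {x y : V d} {c : ℝ} (h : HasRatioLimit k x y c) :
    ratioLimit k x y = c :=
  (h _ (isExhaustion_box d)).limUnder_eq

lemma HasRatioLimit.pos (hk : ∀ x, k x ∈ Set.Icc (0 : ℝ) 1) {x y : V d} (hx : x ∈ Ek k)
    (hy : y ∈ Ek k) {c c' : ℝ} (hxy : HasRatioLimit k x y c) (hyx : HasRatioLimit k y x c') :
    0 < c := by
  have hbox := isExhaustion_box d
  have hprod : c * c' = 1 := by
    refine tendsto_nhds_unique ((hxy _ hbox).mul (hyx _ hbox))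
      (tendsto_const_nhds.congr fun R => ?_)
    rw [div_mul_div_cancel₀ (exitProb_pos hk (hbox.1 R) hx).ne', div_self
      (exitProb_pos hk (hbox.1 R) hy).ne']
  have hnonneg : 0 ≤ c := ge_of_tendsto' (hxy _ hbox) fun R =>
    div_nonneg (exitProb_nonneg (fun z => (hk z).2) y) (exitProb_nonneg (fun z => (hk z).2) x)
  exact hnonneg.lt_of_ne fun h => by simp [← h] at hprod

lemma eq_sum_stepWt_mul_of_tendsto {u : ℕ → V d → ℝ} {a : V d → ℝ} {x : V d}
    (hu : ∀ᶠ R in atTop, u R x = ∑ y ∈ nbrFinset x, stepWt k x y * u R y)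
    (hx : Tendsto (u · x) atTop (𝓝 (a x)))
    (hnbr : ∀ y, IsNbr x y → Tendsto (u · y) atTop (𝓝 (a y))) :
    a x = ∑ y ∈ nbrFinset x, stepWt k x y * a y := by
  refine tendsto_nhds_unique hx
    ((tendsto_finsetSum _ fun y _ => ?_).congr' (hu.mono fun R h => h.symm))
  by_cases hxy : IsNbr x y
  · exact (hnbr y hxy).const_mul _
  · simp [stepWt_eq_zero_of_not_isNbr hxy]

lemma ratioLimit_eq_sum_stepWt_mul (hk : ∀ x, k x ∈ Set.Icc (0 : ℝ) 1) {x₀ x : V d}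
    (hlim : ∀ y ∈ Ek k, HasRatioLimit k x₀ y (ratioLimit k x₀ y)) (hx : x ∈ Ek k) :
    ratioLimit k x₀ x = ∑ y ∈ nbrFinset x, stepWt k x y * ratioLimit k x₀ y := by
  have hbox := isExhaustion_box d
  refine eq_sum_stepWt_mul_of_tendsto
    (u := fun R y => exitProb k (box d R) y / exitProb k (box d R) x₀)
    ?_ (hlim x hx _ hbox) fun y hxy => ?_
  · filter_upwards [hbox.eventually_mem x] with R hR
    rw [exitProb_eq_sum_stepWt_mul hk hR, Finset.sum_div]
    simp only [mul_div_assoc]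
  · by_cases hy : y ∈ Ek k
    · exact hlim y hy _ hbox
    have hky : k y = 1 := (hk y).2.eq_of_not_lt fun h => hy (mem_Ek_of_isNbr hx hxy h)
    refine tendsto_nhds_limUnder ⟨0, tendsto_const_nhds.congr' ?_⟩
    filter_upwards [hbox.eventually_mem y] with R hR
    rw [exitProb_eq_zero_of_eq_one hk hR hky, zero_div]

end RatioLimit

theorem ratio_limit_of_conditioned_converges_general {d : ℕ}
    (k : V d → ℝ) (hk : ∀ x, k x ∈ Set.Icc (0 : ℝ) 1) (hconn : EkConnected k)
    (L : (n : ℕ) → (Fin (n + 1) → V d) → ℝ)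
    (hcv : ∀ Λ : ℕ → Set (V d), IsExhaustion Λ → ∀ (n : ℕ) (s : Fin (n + 1) → V d),
      (∀ i, s i ∈ Ek k) →
      Filter.Tendsto (fun R => jointExitProb k (Λ R) n s / exitProb k (Λ R) (s 0))
        Filter.atTop (nhds (L n s))) :
    ∃ a : V d → ℝ, (∀ x ∈ Ek k, 0 < a x) ∧
      (∀ Λ : ℕ → Set (V d), IsExhaustion Λ → ∀ x ∈ Ek k, ∀ y ∈ Ek k,
        Filter.Tendsto (fun R => exitProb k (Λ R) y / exitProb k (Λ R) x)
          Filter.atTop (nhds (a y / a x))) ∧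
      (∀ x ∈ Ek k, a x = (1 - k x) / (2 * d) * ∑' y : V d, if IsNbr x y then a y else 0) := by
  have hlim : ∀ x ∈ Ek k, ∀ y ∈ Ek k, ∃ c, HasRatioLimit k x y c :=
    fun x hx y hy => exists_hasRatioLimit hconn hcv hx hy
  rcases (Ek k).eq_empty_or_nonempty with hE | ⟨x₀, hx₀⟩
  · exact ⟨1, by simp [hE]⟩
  have htendsto : ∀ y ∈ Ek k, HasRatioLimit k x₀ y (ratioLimit k x₀ y) := fun y hy => by
    obtain ⟨c, hc⟩ := hlim x₀ hx₀ y hy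
    rwa [hc.ratioLimit_eq]
  have hpos : ∀ y ∈ Ek k, 0 < ratioLimit k x₀ y := fun y hy =>
    (htendsto y hy).pos hk hx₀ hy (hlim y hy x₀ hx₀).choose_spec
  refine ⟨ratioLimit k x₀, hpos, fun Λ hΛ x hx y hy => ?_, fun x hx => ?_⟩
  · refine ((htendsto y hy Λ hΛ).div (htendsto x hx Λ hΛ) (hpos x hx).ne').congr fun R => ?_
    exact div_div_div_cancel_right₀ (exitProb_pos hk (hΛ.1 R) hx₀).ne' _ _
  · rw [← sum_nbrFinset_stepWt_mul]
    exact ratioLimit_eq_sum_stepWt_mul hk htendsto hx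

/-- If the killed random walk conditioned to exit `Λ_R` before dying converges
in distribution (finite-dimensional distributions) to a limit independent of the exhaustion, then
there exists a function `a`, positive on `E_k`, which is the ratio limit of exit probabilities for
every exhaustion, and `a` is massive harmonic on `E_k`. -/
theorem ratio_limit_of_conditioned_converges {d : ℕ} (hd : 2 ≤ d)
    (k : V d → ℝ) (hk : ∀ x, k x ∈ Set.Icc (0 : ℝ) 1) (hconn : EkConnected k)
    (L : (n : ℕ) → (Fin (n + 1) → V d) → ℝ)
    (hcv : ∀ Λ : ℕ → Set (V d), IsExhaustion Λ → ∀ (n : ℕ) (s : Fin (n + 1) → V d),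
      (∀ i, s i ∈ Ek k) →
      Filter.Tendsto (fun R => jointExitProb k (Λ R) n s / exitProb k (Λ R) (s 0))
        Filter.atTop (nhds (L n s))) :
    ∃ a : V d → ℝ, (∀ x ∈ Ek k, 0 < a x) ∧
      (∀ Λ : ℕ → Set (V d), IsExhaustion Λ → ∀ x ∈ Ek k, ∀ y ∈ Ek k,
        Filter.Tendsto (fun R => exitProb k (Λ R) y / exitProb k (Λ R) x)
          Filter.atTop (nhds (a y / a x))) ∧
      (∀ x ∈ Ek k, a x = (1 - k x) / (2 * d) * ∑' y : V d, if IsNbr x y then a y else 0) :=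
  ratio_limit_of_conditioned_converges_general k hk hconn L hcv

end KRW
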